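/- Let ab be an edge in a finite simplicial complex K, let K̂ = K ∪ (a * closure(St b)) be the complex obtained from K by adding all cones from a over simplices of the closed star of b, and let i: K ↪ K̂ be the inclusion. If ab satisfies the (p-1)-link condition in K, then the induced homomorphism i_*: H_p(K) → H_p(K̂) on p-th simplicial homology with integer coefficients is surjective. -/

import Mathlib

/-!
A `p`-cycle `z` of `K̂` is moved into `K` in two steps. First, the part `y` of `z` on the
simplices of `K̂ \ K` that miss `b` is coned off from `b`: `z - ∂ (b * y)` is homologous to `z`
and every simplex of `K̂ \ K` in its support contains both `a` and `b`. For such a simplex `τ`,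
`τ \ a` lies in `K`; if `τ \ b` did too, the `(p-1)`-simplex `ξ = τ \ {a, b}` would lie in
`Lk a ∩ Lk b`, hence in `Lk ab` by the link condition, forcing `τ = ab * ξ` into `K`. So `τ \ b` is
a facet of no other simplex of the cycle, and its coefficient in the (vanishing) boundary is
`±` the coefficient of `τ`. Hence the new cycle lies in `K`.
-/

namespace ECpaper

variable {V : Type*} [LinearOrder V]

/-- A finite abstract simplicial complex on a (linearly ordered) vertex type `V`:
a finite collection of nonempty finite subsets of `V` such that every nonempty
subset of a member is a member. -/
structure SC (V : Type*) [LinearOrder V] where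
  faces : Finset (Finset V)
  nonempty_of_mem : ∀ σ ∈ faces, σ.Nonempty
  down_closed : ∀ σ ∈ faces, ∀ τ ⊆ σ, τ.Nonempty → τ ∈ faces

/-- The star of a set `X` of simplices: all simplices of `K` having some member
of `X` as a face. -/
def starOf (K : SC V) (X : Set (Finset V)) : Set (Finset V) :=
  {τ | τ ∈ K.faces ∧ ∃ σ ∈ X, σ ⊆ τ}

/-- The closure of a set `S` of simplices of `K`: all simplices of `S` together
with all of their faces. -/
def closureOf (K : SC V) (S : Set (Finset V)) : Set (Finset V) :=
  {τ | τ ∈ K.faces ∧ ∃ σ ∈ S, τ ⊆ σ}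

/-- The link of a set `X` of simplices: the simplices in the closure of the star of `X`
that do not belong to the star of the closure of `X`. -/
def linkOf (K : SC V) (X : Set (Finset V)) : Set (Finset V) :=
  closureOf K (starOf K X) \ starOf K (closureOf K X)

/-- The link of a vertex `a`. -/
def linkV (K : SC V) (a : V) : Set (Finset V) := linkOf K {{a}}

/-- The link of the edge `ab`. -/
def linkE (K : SC V) (a b : V) : Set (Finset V) := linkOf K {({a, b} : Finset V)}

/-- The link condition for the edge `ab` in `K`: `Lk a ∩ Lk b = Lk ab`. -/
def LinkCond (K : SC V) (a b : V) : Prop :=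
  linkV K a ∩ linkV K b = linkE K a b

/-- The `p`-link condition for the edge `ab` in `K`: either `p ≤ 0`, or `p > 0` and every
`(p-1)`-simplex (i.e. simplex of cardinality `p`) of `Lk a ∩ Lk b` lies in `Lk ab`. -/
def PLink (K : SC V) (a b : V) (p : ℤ) : Prop :=
  p ≤ 0 ∨ (0 < p ∧ ∀ ξ ∈ linkV K a ∩ linkV K b, (ξ.card : ℤ) = p → ξ ∈ linkE K a b)

/-- The dimension of a simplicial complex. -/
def dimSC (K : SC V) : ℤ := ((K.faces.sup Finset.card : ℕ) : ℤ) - 1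

/-- The vertex map of the contraction of the edge `ab`: identity everywhere except
that `b` is sent to `a`. -/
def contr (a b : V) : V → V := fun v => if v = b then a else v

/-- The ambient module of simplicial chains (over all dimensions) with `ℤ` coefficients;
the basis element corresponding to a finset is that simplex with its vertices in
increasing order. -/
abbrev FChain (V : Type*) [LinearOrder V] := Finset V →₀ ℤ

/-- The boundary of a single simplex (zero on vertices and on the empty set). -/
noncomputable def bndOf (σ : Finset V) : FChain V :=
  if σ.card ≤ 1 then 0
  else ∑ v ∈ σ, ((-1 : ℤ) ^ ((σ.filter (fun x => x < v)).card)) •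
        Finsupp.single (σ.erase v) (1 : ℤ)

/-- The simplicial boundary operator. -/
noncomputable def bnd : FChain V →ₗ[ℤ] FChain V :=
  Finsupp.lsum ℤ fun σ => LinearMap.toSpanSingleton ℤ (FChain V) (bndOf σ)

/-- The group of `p`-chains of `K`: the span of the `p`-simplices of `K`. -/
noncomputable def chains (K : SC V) (p : ℕ) : Submodule ℤ (FChain V) :=
  Submodule.span ℤ {x : FChain V | ∃ σ ∈ K.faces, σ.card = p + 1 ∧ x = Finsupp.single σ 1}

/-- The group of `p`-cycles of `K`. -/
noncomputable def cycles (K : SC V) (p : ℕ) : Submodule ℤ (FChain V) :=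
  chains K p ⊓ LinearMap.ker bnd

/-- The group of `p`-boundaries of `K`. -/
noncomputable def bdries (K : SC V) (p : ℕ) : Submodule ℤ (FChain V) :=
  (chains K (p + 1)).map bnd

/-- The `p`-th simplicial homology group of `K` with integer coefficients. -/
abbrev Hmlgy (K : SC V) (p : ℕ) : Type _ :=
  ↥(cycles K p) ⧸ ((bdries K p).comap (cycles K p).subtype)

/-- The homology class of a cycle. -/
noncomputable def HmlgyMk (K : SC V) (p : ℕ) (z : FChain V) (hz : z ∈ cycles K p) :
    Hmlgy K p :=
  Submodule.Quotient.mk ⟨z, hz⟩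

/-- The number of inversions in a list. -/
def inversions : List V → ℕ
  | [] => 0
  | x :: xs => (xs.filter (fun y => decide (y < x))).length + inversions xs

/-- Value of the chain map induced by a vertex map `f` on a single simplex: zero if `f` is
not injective on the simplex, and otherwise the image simplex signed by the permutation
rearranging the images of the vertices (in increasing order) into increasing order. -/
noncomputable def cmapOf (f : V → V) (σ : Finset V) : FChain V :=
  if (σ.image f).card = σ.card then
    ((-1 : ℤ) ^ inversions ((σ.sort (· ≤ ·)).map f)) • Finsupp.single (σ.image f) 1
  else 0

/-- The chain map induced by a vertex map `f`. -/
noncomputable def cmap (f : V → V) : FChain V →ₗ[ℤ] FChain V :=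
  Finsupp.lsum ℤ fun σ => LinearMap.toSpanSingleton ℤ (FChain V) (cmapOf f σ)

/-- Relative `p`-cycles of the pair `(L, L0)`: `p`-chains of `L` whose boundary is a
chain of `L0`. -/
noncomputable def relCycles (L L0 : SC V) (p : ℕ) : Submodule ℤ (FChain V) :=
  chains L p ⊓ Submodule.comap bnd (chains L0 (p - 1))

/-- Relative `p`-boundaries of the pair `(L, L0)`: boundaries of `(p+1)`-chains of `L`
together with `p`-chains of `L0`. -/
noncomputable def relBdries (L L0 : SC V) (p : ℕ) : Submodule ℤ (FChain V) :=
  (chains L (p + 1)).map bnd ⊔ chains L0 p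

/-- The `p`-th relative simplicial homology group of the pair `(L, L0)` with
integer coefficients. -/
abbrev RelHmlgy (L L0 : SC V) (p : ℕ) : Type _ :=
  ↥(relCycles L L0 p) ⧸ ((relBdries L L0 p).comap (relCycles L L0 p).subtype)

/-- The relative homology class of a relative cycle. -/
noncomputable def RelHmlgyMk (L L0 : SC V) (p : ℕ) (z : FChain V)
    (hz : z ∈ relCycles L L0 p) : RelHmlgy L L0 p :=
  Submodule.Quotient.mk ⟨z, hz⟩

/-- A pure simplicial complex of dimension `p`: it is formed by a (nonempty) collection of
`p`-simplices and all their proper faces. -/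
def IsPure (L : SC V) (p : ℕ) : Prop :=
  (∀ σ ∈ L.faces, ∃ τ ∈ L.faces, σ ⊆ τ ∧ τ.card = p + 1) ∧ ∃ σ ∈ L.faces, σ.card = p + 1

/-- An orientation of a complex: a choice of sign (`1` if the chosen orientation of the simplex
is the increasing order of the vertices, `-1` if the opposite) for each simplex. -/
def IsOrientation (K : SC V) (o : Finset V → ℤ) : Prop :=
  ∀ σ ∈ K.faces, o σ = 1 ∨ o σ = -1

/-- Incidence sign (with respect to increasing vertex order) between a codimension-one
face `σ` and a simplex `τ`: `(-1)^i` where `i` is the position in `τ` of the vertex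
missing in `σ`. -/
def incSign (σ τ : Finset V) : ℤ :=
  ∏ v ∈ τ \ σ, (-1 : ℤ) ^ ((τ.filter (fun x => x < v)).card)

/-- An edge of the graph `G_q(K)`: a pair of a `(q-1)`-simplex and an incident `q`-simplex. -/
def IsGEdge (K : SC V) (q : ℕ) (e : Finset V × Finset V) : Prop :=
  e.1 ∈ K.faces ∧ e.2 ∈ K.faces ∧ e.1.card = q ∧ e.2.card = q + 1 ∧ e.1 ⊆ e.2

/-- A circuit of the graph `G_q(K)`: a set of edges of `G_q(K)` in which every vertex of the
graph has even degree. -/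
def IsCircuit (K : SC V) (q : ℕ) (C : Finset (Finset V × Finset V)) : Prop :=
  (∀ e ∈ C, IsGEdge K q e) ∧
  ∀ ρ : Finset V,
    Even ((C.filter (fun e => e.1 = ρ)).card + (C.filter (fun e => e.2 = ρ)).card)

/-- Weight of an edge of `G_q(K)` under the orientation `o`. -/
def edgeWeight (o : Finset V → ℤ) (e : Finset V × Finset V) : ℤ :=
  o e.1 * o e.2 * incSign e.1 e.2

/-- Total weight of a circuit under the orientation `o`. -/
def circWeight (o : Finset V → ℤ) (C : Finset (Finset V × Finset V)) : ℤ :=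
  ∑ e ∈ C, edgeWeight o e

/-- A circuit is b-even if the sum of its edge weights is `0 mod 4`. -/
def BEven (o : Finset V → ℤ) (C : Finset (Finset V × Finset V)) : Prop :=
  circWeight o C % 4 = 0

/-- A circuit is b-odd if the sum of its edge weights is `2 mod 4`. -/
def BOdd (o : Finset V → ℤ) (C : Finset (Finset V × Finset V)) : Prop :=
  circWeight o C % 4 = 2

/-- A circuit `C` of `G_q(K)` has a chord: an edge of the graph not in `C` both of whose
endpoints are vertices of `C`. -/
def HasChord (K : SC V) (q : ℕ) (C : Finset (Finset V × Finset V)) : Prop :=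
  ∃ e : Finset V × Finset V, IsGEdge K q e ∧ e ∉ C ∧
    (∃ c ∈ C, c.1 = e.1) ∧ (∃ c ∈ C, c.2 = e.2)

/-- The boundary matrix `[∂_{p+1}]` of an oriented complex: rows indexed by `p`-simplices,
columns by `(p+1)`-simplices, entries the signed incidence numbers. -/
def boundaryMatrixSucc (K : SC V) (o : Finset V → ℤ) (p : ℕ) :
    Matrix {σ : Finset V // σ ∈ K.faces ∧ σ.card = p + 1}
      {τ : Finset V // τ ∈ K.faces ∧ τ.card = p + 2} ℤ :=
  fun σ τ => if σ.1 ⊆ τ.1 then edgeWeight o (σ.1, τ.1) else 0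

/-- `σ` is a collapsing simplex (w.r.t. contraction of `ab`). -/
def IsCollapsing (a b : V) (σ : Finset V) : Prop := a ∈ σ ∧ b ∈ σ

/-- `σ` and `σ'` are mirror simplices (w.r.t. contraction of `ab`). -/
def IsMirror (a b : V) (σ σ' : Finset V) : Prop :=
  a ∈ σ ∧ b ∈ σ' ∧ σ = insert a (σ'.erase b)

/-- The circuit `C` of `G_{p+1}(K)` contains (an edge incident to) a collapsing `p`-vertex. -/
def ContainsCollapsingLow (a b : V) (C : Finset (Finset V × Finset V)) : Prop :=
  ∃ e ∈ C, IsCollapsing a b e.1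

/-- The circuit `C` of `G_{p+1}(K)` contains a pair of `(p+1)`-vertices that are mirrors of
each other. -/
def ContainsMirrorHigh (a b : V) (C : Finset (Finset V × Finset V)) : Prop :=
  ∃ e ∈ C, ∃ e' ∈ C, IsMirror a b e.2 e'.2

def facetSign (σ : Finset V) (v : V) : ℤ := (-1) ^ (σ.filter (· < v)).card

lemma facetSign_mul_self (σ : Finset V) (v : V) : facetSign σ v * facetSign σ v = 1 := by
  rw [facetSign, ← mul_pow]; simp

lemma card_filter_lt_erase_add {σ : Finset V} {v : V} (hv : v ∈ σ) (w : V) :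
    ((σ.erase v).filter (· < w)).card + (if v < w then 1 else 0) = (σ.filter (· < w)).card := by
  rw [Finset.filter_erase]
  split_ifs with h
  · exact Finset.card_erase_add_one (Finset.mem_filter.2 ⟨hv, h⟩)
  · rw [Finset.erase_eq_of_notMem (by simp [h]), add_zero]

lemma facetSign_mul_facetSign_erase {σ : Finset V} {v w : V} (hv : v ∈ σ) (hw : w ∈ σ)
    (hvw : v ≠ w) :
    facetSign σ v * facetSign (σ.erase v) w = -(facetSign σ w * facetSign (σ.erase w) v) := by
  have kv := card_filter_lt_erase_add hv w
  have kw := card_filter_lt_erase_add hw v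
  have hodd : Odd ((σ.filter (· < v)).card + ((σ.erase v).filter (· < w)).card
      + ((σ.filter (· < w)).card + ((σ.erase w).filter (· < v)).card)) := by
    rw [Nat.odd_iff]
    rcases hvw.lt_or_gt with h | h <;>
      simp only [h, h.not_gt, if_true, if_false] at kv kw <;> omega
  have hprod : facetSign σ v * facetSign (σ.erase v) w
      * (facetSign σ w * facetSign (σ.erase w) v) = -1 := by
    simpa only [facetSign, pow_add] using hodd.neg_one_pow
  linear_combination (facetSign σ w * facetSign (σ.erase w) v) * hprod
    - facetSign σ v * facetSign (σ.erase v) w * (facetSign (σ.erase w) v) ^ 2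
      * facetSign_mul_self σ w
    - facetSign σ v * facetSign (σ.erase v) w * facetSign_mul_self (σ.erase w) v

lemma bndOf_of_card_le_one {σ : Finset V} (h : σ.card ≤ 1) : bndOf σ = 0 := if_pos h

lemma bndOf_of_two_le_card {σ : Finset V} (h : 2 ≤ σ.card) :
    bndOf σ = ∑ v ∈ σ, facetSign σ v • Finsupp.single (σ.erase v) 1 :=
  if_neg (by omega)

lemma mem_support_bndOf {σ τ : Finset V} (h : τ ∈ (bndOf σ).support) :
    2 ≤ σ.card ∧ ∃ v ∈ σ, σ.erase v = τ := by
  by_cases hσ : σ.card ≤ 1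
  · simp [bndOf_of_card_le_one hσ] at h
  rw [bndOf_of_two_le_card (by omega)] at h
  obtain ⟨v, hv, hτ⟩ := Finset.mem_biUnion.1 (Finsupp.support_finsetSum h)
  exact ⟨by omega, v, hv,
    (Finset.mem_singleton.1 (Finsupp.support_single_subset (Finsupp.support_smul hτ))).symm⟩

lemma bndOf_apply_of_notMem {σ τ : Finset V} {v : V} (hσ : 2 ≤ σ.card) (hv : v ∈ σ)
    (hvτ : v ∉ τ) : bndOf σ τ = if σ.erase v = τ then facetSign σ v else 0 := by
  rw [bndOf_of_two_le_card hσ, Finsupp.finsetSum_apply, Finset.sum_eq_single v]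
  · simp [Finsupp.single_apply]
  · intro w _ hwv
    rw [Finsupp.smul_apply, Finsupp.single_eq_of_ne, smul_zero]
    rintro rfl
    exact hvτ (Finset.mem_erase.2 ⟨hwv.symm, hv⟩)
  · exact fun h => absurd hv h

lemma bnd_single (σ : Finset V) (c : ℤ) : bnd (Finsupp.single σ c) = c • bndOf σ := by
  simp [bnd]

lemma bnd_apply (x : FChain V) (τ : Finset V) : bnd x τ = ∑ σ ∈ x.support, x σ * bndOf σ τ := by
  simp [bnd, Finsupp.lsum_apply, Finsupp.sum, Finsupp.finsetSum_apply]

lemma bnd_bndOf (σ : Finset V) : bnd (bndOf σ) = 0 := by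
  by_cases h1 : σ.card ≤ 1
  · rw [bndOf_of_card_le_one h1, map_zero]
  rw [bndOf_of_two_le_card (by omega), map_sum]
  simp_rw [map_smul, bnd_single, one_smul]
  by_cases h2 : σ.card ≤ 2
  · refine Finset.sum_eq_zero fun v hv => ?_
    rw [bndOf_of_card_le_one (by rw [Finset.card_erase_of_mem hv]; omega), smul_zero]
  have hfacet : ∀ v ∈ σ, facetSign σ v • bndOf (σ.erase v) = ∑ w ∈ σ.erase v,
      (facetSign σ v * facetSign (σ.erase v) w) • Finsupp.single ((σ.erase v).erase w) 1 := by
    intro v hv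
    rw [bndOf_of_two_le_card (by rw [Finset.card_erase_of_mem hv]; omega), Finset.smul_sum]
    simp_rw [smul_smul]
  rw [Finset.sum_congr rfl hfacet, ← Finset.sum_finset_product' σ.offDiag σ (fun v => σ.erase v)
    (fun p => by simp only [Finset.mem_offDiag, Finset.mem_erase]; tauto)]
  refine Finset.sum_involution (fun p _ => p.swap) ?_ ?_ ?_ fun _ _ => rfl
  · rintro ⟨v, w⟩ hp
    obtain ⟨hv, hw, hvw⟩ := Finset.mem_offDiag.1 hp
    rw [Prod.fst_swap, Prod.snd_swap, Finset.erase_right_comm (a := w), ← add_smul,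
      facetSign_mul_facetSign_erase hv hw hvw, neg_add_cancel, zero_smul]
  · rintro ⟨v, w⟩ hp - h
    exact (Finset.mem_offDiag.1 hp).2.2 (Prod.ext_iff.1 h).1.symm
  · rintro ⟨v, w⟩ hp
    obtain ⟨hv, hw, hvw⟩ := Finset.mem_offDiag.1 hp
    exact Finset.mem_offDiag.2 ⟨hw, hv, hvw.symm⟩

lemma bnd_bnd (x : FChain V) : bnd (bnd x) = 0 := by
  induction x using Finsupp.induction_linear with
  | zero => simp
  | add x y hx hy => simp [hx, hy]
  | single σ c => rw [bnd_single, map_smul, bnd_bndOf, smul_zero]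

lemma mem_chains_iff {L : SC V} {p : ℕ} {x : FChain V} :
    x ∈ chains L p ↔ ∀ σ ∈ x.support, σ ∈ L.faces ∧ σ.card = p + 1 := by
  have : chains L p = Finsupp.supported ℤ ℤ {σ | σ ∈ L.faces ∧ σ.card = p + 1} := by
    rw [Finsupp.supported_eq_span_single, chains]
    congr 1
    ext x
    constructor
    · rintro ⟨σ, h1, h2, rfl⟩; exact ⟨σ, ⟨h1, h2⟩, rfl⟩
    · rintro ⟨σ, ⟨h1, h2⟩, rfl⟩; exact ⟨σ, h1, h2, rfl⟩
  rw [this, Finsupp.mem_supported]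
  rfl

lemma bnd_mem_chains {L : SC V} {p : ℕ} {x : FChain V} (hx : x ∈ chains L (p + 1)) :
    bnd x ∈ chains L p := by
  rw [mem_chains_iff] at hx ⊢
  intro τ hτ
  obtain ⟨σ, hσ, hστ⟩ := Finset.exists_ne_zero_of_sum_ne_zero
    (bnd_apply x τ ▸ Finsupp.mem_support_iff.1 hτ)
  obtain ⟨hcard, v, hv, rfl⟩ :=
    mem_support_bndOf (Finsupp.mem_support_iff.2 (right_ne_zero_of_mul hστ))
  obtain ⟨hσL, hσc⟩ := hx σ hσ
  refine ⟨L.down_closed σ hσL _ (Finset.erase_subset v σ) ?_, ?_⟩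
  · rw [← Finset.card_pos, Finset.card_erase_of_mem hv]; omega
  · rw [Finset.card_erase_of_mem hv]; omega

lemma exists_ne_erase_eq_of_bnd_eq_zero {z : FChain V} (hz : bnd z = 0) {τ₀ : Finset V}
    (hτ₀ : τ₀ ∈ z.support) (hcard : 2 ≤ τ₀.card) {v : V} (hv : v ∈ τ₀) :
    ∃ τ ∈ z.support, τ ≠ τ₀ ∧ ∃ u ∈ τ, τ.erase u = τ₀.erase v := by
  by_contra! h
  have hcoeff := bnd_apply z (τ₀.erase v)
  rw [hz, Finsupp.zero_apply, Finset.sum_eq_single τ₀,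
    bndOf_apply_of_notMem hcard hv (Finset.notMem_erase v τ₀), if_pos rfl] at hcoeff
  · refine mul_ne_zero (Finsupp.mem_support_iff.1 hτ₀) ?_ hcoeff.symm
    exact left_ne_zero_of_mul_eq_one (facetSign_mul_self τ₀ v)
  · intro τ hτ hττ₀
    suffices bndOf τ (τ₀.erase v) = 0 by rw [this, mul_zero]
    refine Finsupp.notMem_support_iff.1 fun hmem => ?_
    obtain ⟨-, u, hu, heq⟩ := mem_support_bndOf hmem
    exact h τ hτ hττ₀ u hu heq
  · exact fun h => absurd hτ₀ h

/-- The cone `b * y`; the sign makes `σ` appear with coefficient `1` in `∂ (b * σ)`. -/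
noncomputable def cone (b : V) (y : FChain V) : FChain V :=
  y.sum fun σ c => (c * facetSign (insert b σ) b) • Finsupp.single (insert b σ) 1

lemma bnd_cone_apply {b : V} {y : FChain V} (hy : ∀ σ ∈ y.support, b ∉ σ ∧ σ.Nonempty)
    {τ : Finset V} (hτ : b ∉ τ) : bnd (cone b y) τ = y τ := by
  have hbnd : bnd (cone b y) =
      y.sum fun σ c => (c * facetSign (insert b σ) b) • bndOf (insert b σ) := by
    rw [cone, map_finsuppSum]
    simp only [map_smul, bnd_single, one_smul]
  have hterm : ∀ σ ∈ y.support,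
      ((y σ * facetSign (insert b σ) b) • bndOf (insert b σ)) τ = if σ = τ then y σ else 0 := by
    intro σ hσ
    obtain ⟨hbσ, hσne⟩ := hy σ hσ
    have hcard : 2 ≤ (insert b σ).card := by
      rw [Finset.card_insert_of_notMem hbσ]; have := hσne.card_pos; omega
    rw [Finsupp.smul_apply, bndOf_apply_of_notMem hcard (Finset.mem_insert_self b σ) hτ,
      Finset.erase_insert hbσ]
    split_ifs
    · rw [smul_eq_mul, mul_assoc, facetSign_mul_self, mul_one]
    · rw [smul_zero]
  rw [hbnd, Finsupp.sum_apply, ← Finsupp.sum_ite_self_eq' y τ]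
  exact Finsupp.sum_congr hterm

lemma cone_mem_chains {L : SC V} {p : ℕ} {b : V} {y : FChain V}
    (hy : ∀ σ ∈ y.support, b ∉ σ ∧ insert b σ ∈ L.faces ∧ σ.card = p + 1) :
    cone b y ∈ chains L (p + 1) := by
  refine Submodule.finsuppSum_mem _ _ _ _ fun σ hσ => Submodule.smul_mem _ _ ?_
  obtain ⟨hbσ, hσL, hσc⟩ := hy σ (Finsupp.mem_support_iff.2 hσ)
  exact Submodule.subset_span
    ⟨insert b σ, hσL, by rw [Finset.card_insert_of_notMem hbσ, hσc], rfl⟩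

lemma mem_linkV {K : SC V} {a : V} {ξ : Finset V} (hξ : ξ.Nonempty) (haξ : a ∉ ξ)
    (h : insert a ξ ∈ K.faces) : ξ ∈ linkV K a := by
  refine ⟨⟨K.down_closed _ h ξ (Finset.subset_insert a ξ) hξ, insert a ξ,
    ⟨h, {a}, rfl, by simp⟩, Finset.subset_insert a ξ⟩, ?_⟩
  rintro ⟨-, ρ, ⟨hρK, _, rfl, hρa⟩, hρξ⟩
  obtain ⟨x, hx⟩ := K.nonempty_of_mem ρ hρK
  exact haξ (Finset.mem_singleton.1 (hρa hx) ▸ hρξ hx)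

lemma insert_insert_mem_of_mem_linkE {K : SC V} {a b : V} {ξ : Finset V}
    (h : ξ ∈ linkE K a b) : insert a (insert b ξ) ∈ K.faces := by
  obtain ⟨⟨-, σ, ⟨hσK, _, rfl, habσ⟩, hξσ⟩, -⟩ := h
  exact K.down_closed σ hσK _
    (Finset.insert_subset (habσ (by simp)) (Finset.insert_subset (habσ (by simp)) hξσ))
    (Finset.insert_nonempty _ _)

lemma PLink.insert_insert_mem {K : SC V} {a b : V} {ξ : Finset V} (h : PLink K a b ξ.card)
    (hab : ({a, b} : Finset V) ∈ K.faces) (ha : a ∉ ξ) (hb : b ∉ ξ)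
    (haξ : insert a ξ ∈ K.faces) (hbξ : insert b ξ ∈ K.faces) :
    insert a (insert b ξ) ∈ K.faces := by
  rcases ξ.eq_empty_or_nonempty with rfl | hξ
  · simpa using hab
  rcases h with h | ⟨-, h⟩
  · have := hξ.card_pos; omega
  · exact insert_insert_mem_of_mem_linkE (h ξ ⟨mem_linkV hξ ha haξ, mem_linkV hξ hb hbξ⟩ rfl)

lemma PLink.mem_of_erase_mem {K : SC V} {a b : V} {τ : Finset V}
    (h : PLink K a b ((τ.card : ℤ) - 2)) (hab : ({a, b} : Finset V) ∈ K.faces) (hne : a ≠ b)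
    (ha : a ∈ τ) (hb : b ∈ τ) (hτa : τ.erase a ∈ K.faces) (hτb : τ.erase b ∈ K.faces) :
    τ ∈ K.faces := by
  have haτb : a ∈ τ.erase b := Finset.mem_erase.2 ⟨hne, ha⟩
  have hbτa : b ∈ τ.erase a := Finset.mem_erase.2 ⟨hne.symm, hb⟩
  have hcard : (((τ.erase b).erase a).card : ℤ) = τ.card - 2 := by
    have := Finset.card_erase_add_one haτb
    have := Finset.card_erase_add_one hb
    omega
  have hins_a : insert a ((τ.erase b).erase a) = τ.erase b := Finset.insert_erase haτb
  have hins_b : insert b ((τ.erase b).erase a) = τ.erase a := by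
    rw [Finset.erase_right_comm, Finset.insert_erase hbτa]
  have := PLink.insert_insert_mem (hcard ▸ h) hab (Finset.notMem_erase a _)
    (fun h => Finset.notMem_erase b τ (Finset.mem_of_mem_erase h)) (by rwa [hins_a])
    (by rwa [hins_b])
  rwa [hins_b, Finset.insert_erase ha] at this

/-- `Khat = K ∪ a * closure (St b)`. -/
def IsConeOnClosedStar (K Khat : SC V) (a b : V) : Prop :=
  ∀ τ : Finset V, τ ∈ Khat.faces ↔
    (τ ∈ K.faces ∨ (τ.Nonempty ∧ ∃ σ ∈ closureOf K (starOf K {{b}}), τ ⊆ insert a σ))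

namespace IsConeOnClosedStar

variable {K Khat : SC V} {a b : V}

lemma mem_and_insert_erase_mem (h : IsConeOnClosedStar K Khat a b) {τ : Finset V}
    (hτ : τ ∈ Khat.faces) (hτK : τ ∉ K.faces) : a ∈ τ ∧ insert b (τ.erase a) ∈ K.faces := by
  obtain hτK' | ⟨hτne, σ, ⟨hσK, ρ, ⟨hρK, _, rfl, hbρ⟩, hσρ⟩, hτσ⟩ := (h τ).1 hτ
  · exact absurd hτK' hτK
  have haτ : a ∈ τ := by
    by_contra haτ
    refine hτK (K.down_closed σ hσK τ (fun x hx => ?_) hτne)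
    exact (Finset.mem_insert.1 (hτσ hx)).resolve_left (ne_of_mem_of_not_mem hx haτ)
  refine ⟨haτ, K.down_closed ρ hρK _ (Finset.insert_subset (hbρ (Finset.mem_singleton_self b))
    fun x hx => hσρ ?_) (Finset.insert_nonempty _ _)⟩
  exact (Finset.mem_insert.1 (hτσ (Finset.mem_of_mem_erase hx))).resolve_left
    (Finset.ne_of_mem_erase hx)

lemma insert_mem (h : IsConeOnClosedStar K Khat a b) {τ : Finset V} (hτ : τ ∈ Khat.faces)
    (hτK : τ ∉ K.faces) : insert b τ ∈ Khat.faces := by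
  obtain ⟨haτ, hσ⟩ := h.mem_and_insert_erase_mem hτ hτK
  refine (h _).2 (Or.inr ⟨Finset.insert_nonempty _ _, insert b (τ.erase a),
    ⟨hσ, _, ⟨hσ, {b}, rfl, by simp⟩, subset_rfl⟩, ?_⟩)
  rw [Finset.insert_comm, Finset.insert_erase haτ]

lemma exists_sub_mem_bdries (h : IsConeOnClosedStar K Khat a b) {p : ℕ} {z : FChain V}
    (hz : z ∈ cycles Khat p) :
    ∃ z' ∈ cycles Khat p, z - z' ∈ bdries Khat p ∧ ∀ τ ∈ z'.support, τ ∉ K.faces → b ∈ τ := by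
  obtain ⟨hzc, hzb⟩ := Submodule.mem_inf.1 hz
  have hzc' := mem_chains_iff.1 hzc
  set y := z.filter fun τ => τ ∉ K.faces ∧ b ∉ τ
  have hy : ∀ τ ∈ y.support, τ ∈ z.support ∧ τ ∉ K.faces ∧ b ∉ τ := by
    simp [y, Finsupp.support_filter]
  have hc : cone b y ∈ chains Khat (p + 1) := cone_mem_chains fun σ hσ => by
    obtain ⟨hσz, hσK, hbσ⟩ := hy σ hσ
    exact ⟨hbσ, h.insert_mem (hzc' σ hσz).1 hσK, (hzc' σ hσz).2⟩
  refine ⟨z - bnd (cone b y), Submodule.mem_inf.2 ⟨sub_mem hzc (bnd_mem_chains hc), ?_⟩, ?_, ?_⟩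
  · rw [LinearMap.mem_ker, map_sub, LinearMap.mem_ker.1 hzb, bnd_bnd, sub_zero]
  · rw [sub_sub_cancel]
    exact Submodule.mem_map_of_mem hc
  · intro τ hτ hτK
    by_contra hbτ
    refine Finsupp.mem_support_iff.1 hτ ?_
    have hyb : ∀ σ ∈ y.support, b ∉ σ ∧ σ.Nonempty := fun σ hσ =>
      ⟨(hy σ hσ).2.2, Khat.nonempty_of_mem σ (hzc' σ (hy σ hσ).1).1⟩
    rw [Finsupp.sub_apply, bnd_cone_apply hyb hbτ, Finsupp.filter_apply_pos _ _ ⟨hτK, hbτ⟩,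
      sub_self]

lemma mem_chains_of_bnd_eq_zero (h : IsConeOnClosedStar K Khat a b) (hne : a ≠ b)
    (hab : ({a, b} : Finset V) ∈ K.faces) {p : ℕ} (hpl : PLink K a b ((p : ℤ) - 1))
    {z : FChain V} (hzc : z ∈ chains Khat p) (hzb : bnd z = 0)
    (hzK : ∀ τ ∈ z.support, τ ∉ K.faces → b ∈ τ) : z ∈ chains K p := by
  rw [mem_chains_iff] at hzc ⊢
  intro τ₀ hτ₀
  obtain ⟨hτ₀Khat, hτ₀card⟩ := hzc τ₀ hτ₀
  refine ⟨?_, hτ₀card⟩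
  by_contra hτ₀K
  obtain ⟨haτ₀, hτ₀a⟩ := h.mem_and_insert_erase_mem hτ₀Khat hτ₀K
  have hbτ₀ := hzK τ₀ hτ₀ hτ₀K
  rw [Finset.insert_eq_of_mem (Finset.mem_erase.2 ⟨hne.symm, hbτ₀⟩)] at hτ₀a
  have hpl' : PLink K a b ((τ₀.card : ℤ) - 2) := by
    rwa [show (τ₀.card : ℤ) - 2 = p - 1 by omega]
  have hτ₀b : τ₀.erase b ∉ K.faces := fun hτ₀b =>
    hτ₀K (hpl'.mem_of_erase_mem hab hne haτ₀ hbτ₀ hτ₀a hτ₀b)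
  have hcard : 2 ≤ τ₀.card := by
    have := Finset.card_le_card (Finset.insert_subset haτ₀ (Finset.singleton_subset_iff.2 hbτ₀))
    rwa [Finset.card_pair hne] at this
  obtain ⟨τ, hτ, hττ₀, u, hu, hτu⟩ := exists_ne_erase_eq_of_bnd_eq_zero hzb hτ₀ hcard hbτ₀
  by_cases hτK : τ ∈ K.faces
  · exact hτ₀b (K.down_closed τ hτK _ (hτu ▸ Finset.erase_subset u τ)
      ⟨a, Finset.mem_erase.2 ⟨hne, haτ₀⟩⟩)
  have hbτ := hzK τ hτ hτK
  obtain rfl : u = b := by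
    by_contra hub
    exact Finset.notMem_erase b τ₀ (hτu ▸ Finset.mem_erase.2 ⟨Ne.symm hub, hbτ⟩)
  exact hττ₀ (by rw [← Finset.insert_erase hbτ, hτu, Finset.insert_erase hbτ₀])

end IsConeOnClosedStar

lemma hmlgyMk_eq_of_sub_mem {K : SC V} {p : ℕ} {z z' : FChain V} (hz : z ∈ cycles K p)
    (hz' : z' ∈ cycles K p) (h : z - z' ∈ bdries K p) : HmlgyMk K p z hz = HmlgyMk K p z' hz' :=
  (Submodule.Quotient.eq _).2 h

/-- with `K̂ = K ∪ (a * closure(St b))`, if `ab` satisfies the `(p-1)`-link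
condition then the inclusion-induced map `H_p(K) → H_p(K̂)` is surjective. -/
theorem statement5 (K Khat : SC V) (a b : V) (hne : a ≠ b)
    (hab : ({a, b} : Finset V) ∈ K.faces)
    (hKhat : ∀ τ : Finset V, τ ∈ Khat.faces ↔
      (τ ∈ K.faces ∨ (τ.Nonempty ∧ ∃ σ ∈ closureOf K (starOf K {{b}}), τ ⊆ insert a σ)))
    (p : ℕ) (hpl : PLink K a b ((p : ℤ) - 1))
    (φ : Hmlgy K p →ₗ[ℤ] Hmlgy Khat p)
    (hφ : ∀ (z : FChain V) (hz : z ∈ cycles K p) (hz' : z ∈ cycles Khat p),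
      φ (HmlgyMk K p z hz) = HmlgyMk Khat p z hz') :
    Function.Surjective φ := by
  intro c
  obtain ⟨⟨z, hz⟩, rfl⟩ := Submodule.Quotient.mk_surjective _ c
  obtain ⟨z', hz', hzz', hz'b⟩ := IsConeOnClosedStar.exists_sub_mem_bdries hKhat hz
  have hz'K : z' ∈ cycles K p :=
    ⟨IsConeOnClosedStar.mem_chains_of_bnd_eq_zero hKhat hne hab hpl hz'.1 hz'.2 hz'b, hz'.2⟩
  refine ⟨HmlgyMk K p z' hz'K, ?_⟩
  rw [hφ z' hz'K hz']
  exact (hmlgyMk_eq_of_sub_mem hz hz' hzz').symm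

end ECpaper
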